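/- Uniqueness of the weak KAM solution for the spherical pendulum: every backward weak KAM solution u: S^n → ℝ for the value c = 1 (i.e. u ≺ L+1 and for every x ∈ S^n there is a C¹ curve γ_x:(−∞,0] → S^n with γ_x(0)=x and u(x) − u(γ_x(−t)) = ∫_{−t}^0 L(γ_x,γ̇_x) ds + t for all t ≥ 0) is of the form u(x) = u(N) + ∫_{x_{n+1}}^1 √((2−2s)/(1−s²)) ds, where N = (0,…,0,1) is the north pole; in other words, backward weak KAM solutions are unique up to an additive constant. -/

import Mathlib

/-!
Write `φ(x) = 2√(2 + 2x_{n+1})`, so that `u₊ = 4 - φ`. For tangent vectors `|dφ(v)| ≤ L(x, v) + 1`,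
so `u₊` is itself dominated by `L + 1` (after regularising `φ` at the south pole).

If `u` is a backward weak KAM solution, the cost `u(x) - u(γₓ(-t))` of its calibrated curve `γₓ` is
bounded because `u` is, while `L + 1 ≥ 1 - x_{n+1}`; hence `γₓ` comes arbitrarily close to `N`, and
comparing `u` with `u₊` along `γₓ` gives `u(N) + u₊(x) ≤ u(x)`. Conversely, along the great circle
from `N` to `x` run on the pendulum separatrix, the action of `L + 1` from time `-∞` is exactly
`u₊(x)`, so domination gives `u(x) ≤ u(N) + u₊(x)`. Both limits use that a dominated function is
Lipschitz along great circles through `N`.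
-/

open Set

noncomputable section

namespace SphericalPendulum

variable (n : ℕ)

/-- The ambient Euclidean space `ℝ^{n+1}`. -/
abbrev Amb := EuclideanSpace ℝ (Fin (n + 1))

/-- The unit sphere `S^n ⊂ ℝ^{n+1}`. -/
abbrev Sph := Metric.sphere (0 : Amb n) 1

/-- The last coordinate `x_{n+1}` of a point of `ℝ^{n+1}`. -/
def lastCoord (x : Amb n) : ℝ := x (Fin.last n)

/-- The spherical-pendulum Lagrangian `L(x,v) = ½‖v‖² − x_{n+1}`. -/
def Lsph (x v : Amb n) : ℝ := ‖v‖ ^ 2 / 2 - lastCoord n x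

/-- Velocity of a curve in the sphere, computed in the ambient space. -/
def sVel (γ : ℝ → Sph n) (s : ℝ) : Amb n := deriv (fun t : ℝ => (γ t : Amb n)) s

/-- Piecewise `C¹` curve `γ : [a,b] → S^n`. -/
def sPiecewiseC1On (γ : ℝ → Sph n) (a b : ℝ) : Prop :=
  ContinuousOn (fun t : ℝ => (γ t : Amb n)) (Icc a b) ∧
    ∃ (k : ℕ) (t : Fin (k + 1) → ℝ), StrictMono t ∧ t 0 = a ∧ t (Fin.last k) = b ∧
      ∀ i : Fin k, ContDiffOn ℝ 1 (fun s : ℝ => (γ s : Amb n))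
        (Icc (t i.castSucc) (t i.succ))

/-- The action `A_L(γ) = ∫_a^b L(γ(s), γ̇(s)) ds` of a curve `γ : [a,b] → S^n`. -/
def sAction (γ : ℝ → Sph n) (a b : ℝ) : ℝ :=
  ∫ s in a..b, Lsph n (γ s : Amb n) (sVel n γ s)

/-- `u ≺ L + c` : `u` is dominated by `L + c`. -/
def sDominated (c : ℝ) (u : Sph n → ℝ) : Prop :=
  ∀ (γ : ℝ → Sph n) (a b : ℝ), a ≤ b → sPiecewiseC1On n γ a b →
    u (γ b) - u (γ a) ≤ sAction n γ a b + c * (b - a)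

/-- The weak KAM solution `u₊(x) = ∫_{x_{n+1}}^1 √((2−2s)/(1−s²)) ds`. -/
def uPlus (x : Sph n) : ℝ :=
  ∫ s in (lastCoord n (x : Amb n))..1, Real.sqrt ((2 - 2 * s) / (1 - s ^ 2))

/-- Backward weak KAM solution for the value `c`, for the spherical pendulum. -/
def sBackwardWeakKAM (c : ℝ) (u : Sph n → ℝ) : Prop :=
  sDominated n c u ∧
    ∀ x : Sph n, ∃ γ : ℝ → Sph n, γ 0 = x ∧
      ContDiffOn ℝ 1 (fun s : ℝ => (γ s : Amb n)) (Iic 0) ∧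
      ∀ t : ℝ, 0 ≤ t → u x - u (γ (-t)) = sAction n γ (-t) 0 + c * t

/-- The north pole `N = (0,…,0,1) ∈ S^n`. -/
def northPole : Sph n :=
  ⟨EuclideanSpace.single (Fin.last n) (1 : ℝ), by simp⟩

open Real Filter Topology MeasureTheory RealInnerProductSpace

section InnerProductSpace

variable {E : Type*} [NormedAddCommGroup E] [InnerProductSpace ℝ E]

theorem inner_eq_zero_of_hasDerivAt_of_norm_eq {f : ℝ → E} {f' : E} {s r : ℝ}
    (hf : HasDerivAt f f' s) (hr : ∀ t, ‖f t‖ = r) : ⟪f s, f'⟫ = 0 := by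
  have hconst : HasDerivAt (fun t => ‖f t‖ ^ 2) 0 s := by
    simp only [hr]
    exact hasDerivAt_const s _
  simpa using hf.norm_sq.unique hconst

theorem inner_sq_le_of_inner_eq_zero {x v e : E} (hx : ‖x‖ = 1) (he : ‖e‖ = 1)
    (hxv : ⟪x, v⟫ = 0) : ⟪v, e⟫ ^ 2 ≤ ‖v‖ ^ 2 * (1 - ⟪x, e⟫ ^ 2) := by
  have hproj : ⟪v, e⟫ = ⟪v, e - ⟪x, e⟫ • x⟫ := by
    rw [inner_sub_right, real_inner_smul_right, real_inner_comm x v, hxv, mul_zero, sub_zero]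
  have hnorm : ‖e - ⟪x, e⟫ • x‖ ^ 2 = 1 - ⟪x, e⟫ ^ 2 := by
    rw [norm_sub_sq_real, real_inner_smul_right, norm_smul, real_inner_comm, he, hx,
      Real.norm_eq_abs]
    ring_nf
    rw [sq_abs]
    ring
  rw [hproj, ← hnorm, ← real_inner_self_eq_norm_sq, ← real_inner_self_eq_norm_sq, sq]
  exact real_inner_mul_inner_self_le _ _

theorem norm_cos_smul_add_sin_smul {x y : E} (hx : ‖x‖ = 1) (hy : ‖y‖ = 1) (hxy : ⟪x, y⟫ = 0)
    (t : ℝ) : ‖cos t • x + sin t • y‖ = 1 := by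
  have hpyth := norm_add_sq_eq_norm_sq_add_norm_sq_real
    (x := cos t • x) (y := sin t • y)
    (by rw [real_inner_smul_left, real_inner_smul_right, hxy, mul_zero, mul_zero])
  rw [norm_smul, norm_smul, hx, hy, mul_one, mul_one, Real.norm_eq_abs, Real.norm_eq_abs,
    abs_mul_abs_self, abs_mul_abs_self] at hpyth
  nlinarith [norm_nonneg (cos t • x + sin t • y), cos_sq_add_sin_sq t]

end InnerProductSpace

section Sphere

variable {n : ℕ}

theorem continuous_lastCoord : Continuous (lastCoord n) :=
  (EuclideanSpace.proj (𝕜 := ℝ) (Fin.last n)).continuous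

theorem hasDerivAt_lastCoord {f : ℝ → Amb n} {f' : Amb n} {s : ℝ} (hf : HasDerivAt f f' s) :
    HasDerivAt (fun t => lastCoord n (f t)) (lastCoord n f') s :=
  (EuclideanSpace.proj (𝕜 := ℝ) (Fin.last n)).hasFDerivAt.comp_hasDerivAt s hf

theorem lastCoord_eq_inner (x : Amb n) : lastCoord n x = ⟪x, (northPole n : Amb n)⟫ := by
  simp [northPole, lastCoord, EuclideanSpace.inner_single_right]

theorem lastCoord_northPole : lastCoord n (northPole n : Amb n) = 1 := by
  simp [northPole, lastCoord]

theorem abs_lastCoord_le (x : Sph n) : |lastCoord n x| ≤ 1 := by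
  simpa [lastCoord_eq_inner] using abs_real_inner_le_norm (x : Amb n) (northPole n)

theorem neg_one_le_lastCoord (x : Sph n) : -1 ≤ lastCoord n x :=
  (abs_le.1 (abs_lastCoord_le x)).1

theorem lastCoord_le_one (x : Sph n) : lastCoord n x ≤ 1 :=
  (abs_le.1 (abs_lastCoord_le x)).2

/-- `|dφₓ(v)| ≤ L(x, v) + 1` for `φ(x) = 2√(2 + 2x_{n+1})`, with the denominator cleared. -/
theorem two_mul_abs_lastCoord_le {x : Sph n} {v : Amb n} (hv : ⟪(x : Amb n), v⟫ = 0) :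
    2 * |lastCoord n v| ≤ (Lsph n x v + 1) * √(2 + 2 * lastCoord n x) := by
  have hlv : lastCoord n v ^ 2 ≤ ‖v‖ ^ 2 * (1 - lastCoord n x ^ 2) := by
    simpa only [lastCoord_eq_inner] using
      inner_sq_le_of_inner_eq_zero (norm_eq_of_mem_sphere x) (norm_eq_of_mem_sphere (northPole n))
        hv
  have hc := abs_le.1 (abs_lastCoord_le x)
  have hroot : √(2 + 2 * lastCoord n x) ^ 2 = 2 + 2 * lastCoord n x := Real.sq_sqrt (by linarith)
  have hA : 0 ≤ Lsph n x v + 1 := by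
    simp only [Lsph]
    nlinarith [sq_nonneg ‖v‖]
  rw [show 2 * |lastCoord n v| = |2 * lastCoord n v| by rw [abs_mul, abs_two]]
  refine abs_le_of_sq_le_sq ?_ (mul_nonneg hA (Real.sqrt_nonneg _))
  rw [mul_pow, mul_pow, hroot]
  simp only [Lsph]
  nlinarith [mul_nonneg (sq_nonneg (‖v‖ ^ 2 / 2 - (1 - lastCoord n x)))
    (by linarith : (0 : ℝ) ≤ 2 + 2 * lastCoord n x)]

theorem integral_sqrt_eq {c : ℝ} (hc : -1 ≤ c) (hc1 : c ≤ 1) :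
    ∫ s in c..1, √((2 - 2 * s) / (1 - s ^ 2)) = 4 - 2 * √(2 + 2 * c) := by
  have hderiv : ∀ s ∈ Ioo c 1,
      HasDerivAt (fun s => 2 * √(2 + 2 * s)) (√((2 - 2 * s) / (1 - s ^ 2))) s := by
    intro s hs
    have hpos : 0 < 2 + 2 * s := by linarith [hs.1]
    have hroot : 0 < √(2 + 2 * s) := Real.sqrt_pos.2 hpos
    have hval : (2 - 2 * s) / (1 - s ^ 2) = 2 ^ 2 / (2 + 2 * s) := by
      rw [div_eq_div_iff (by nlinarith [hs.2]) hpos.ne']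
      ring
    refine ((((hasDerivAt_id' s).const_mul 2).const_add 2).sqrt hpos.ne').const_mul 2
      |>.congr_deriv ?_
    rw [hval, Real.sqrt_div (sq_nonneg 2), Real.sqrt_sq zero_le_two]
    field_simp
  have hcont : ContinuousOn (fun s => 2 * √(2 + 2 * s)) (uIcc c 1) := by fun_prop
  have hint : IntervalIntegrable (fun s => √((2 - 2 * s) / (1 - s ^ 2))) volume c 1 :=
    intervalIntegral.intervalIntegrable_deriv_of_nonneg hcont
      (by simpa [hc1] using hderiv) (fun _ _ => Real.sqrt_nonneg _)
  rw [intervalIntegral.integral_eq_sub_of_hasDerivAt_of_le hc1 (by simpa [hc1] using hcont)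
    hderiv hint]
  norm_num [show (4 : ℝ) = 2 ^ 2 by norm_num]

theorem uPlus_eq (x : Sph n) : uPlus n x = 4 - 2 * √(2 + 2 * lastCoord n x) :=
  integral_sqrt_eq (neg_one_le_lastCoord x) (lastCoord_le_one x)

theorem uPlus_northPole : uPlus n (northPole n) = 0 := by
  rw [uPlus_eq, lastCoord_northPole]
  norm_num [show (4 : ℝ) = 2 ^ 2 by norm_num]

end Sphere

section Action

variable {n : ℕ}

theorem exists_hasDerivAt_of_contDiffOn {F : Type*} [NormedAddCommGroup F] [NormedSpace ℝ F]
    {f : ℝ → F} {a b : ℝ} (hf : ContDiffOn ℝ 1 f (Icc a b)) :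
    ∃ f' : ℝ → F, ContinuousOn f' (Icc a b) ∧ ∀ s ∈ Ioo a b, HasDerivAt f (f' s) s := by
  rcases lt_or_ge a b with hab | hba
  · refine ⟨derivWithin f (Icc a b), hf.continuousOn_derivWithin (uniqueDiffOn_Icc hab) le_rfl,
      fun s hs => ?_⟩
    have hnhds : Icc a b ∈ 𝓝 s := Icc_mem_nhds hs.1 hs.2
    rw [derivWithin_of_mem_nhds hnhds]
    exact ((hf.differentiableOn one_ne_zero s (Ioo_subset_Icc_self hs)).differentiableAt
      hnhds).hasDerivAt
  · exact ⟨0, continuousOn_const, fun s hs => absurd (hs.1.trans hs.2) hba.not_gt⟩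

theorem continuousOn_Lsph {γ : ℝ → Sph n} {W : ℝ → Amb n} {S : Set ℝ}
    (hγ : ContinuousOn (fun t => (γ t : Amb n)) S) (hW : ContinuousOn W S) :
    ContinuousOn (fun t => Lsph n (γ t) (W t)) S :=
  ((hW.norm.pow 2).div_const 2).sub (continuous_lastCoord.comp_continuousOn hγ)

theorem sAction_add_mul_eq_integral {γ : ℝ → Sph n} {W : ℝ → Amb n} {a b : ℝ} (c : ℝ)
    (hab : a ≤ b) (hγ : ContinuousOn (fun t => (γ t : Amb n)) (Icc a b))
    (hW : ContinuousOn W (Icc a b))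
    (hd : ∀ s ∈ Ioo a b, HasDerivAt (fun t => (γ t : Amb n)) (W s) s) :
    sAction n γ a b + c * (b - a) = ∫ s in a..b, (Lsph n (γ s) (W s) + c) := by
  have hvel : sAction n γ a b = ∫ s in a..b, Lsph n (γ s) (W s) := by
    refine intervalIntegral.integral_congr_ae ?_
    filter_upwards [Measure.ae_ne volume b] with s hsb hs
    rw [uIoc_of_le hab] at hs
    rw [sVel, (hd s ⟨hs.1, lt_of_le_of_ne hs.2 hsb⟩).deriv]
  rw [intervalIntegral.integral_add ((continuousOn_Lsph hγ hW).intervalIntegrable_of_Icc hab)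
    intervalIntegrable_const, hvel, intervalIntegral.integral_const, smul_eq_mul, mul_comm]

theorem sPiecewiseC1On_of_contDiffOn {γ : ℝ → Sph n} {a b : ℝ} (hab : a ≤ b)
    (hγ : ContDiffOn ℝ 1 (fun t => (γ t : Amb n)) (Icc a b)) : sPiecewiseC1On n γ a b := by
  refine ⟨hγ.continuousOn, ?_⟩
  rcases hab.eq_or_lt with rfl | hlt
  · exact ⟨0, fun _ => a, Fin.strictMono_iff_lt_succ.2 fun i => i.elim0, rfl, rfl, fun i => i.elim0⟩
  · refine ⟨1, ![a, b], ?_, rfl, rfl, fun i => ?_⟩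
    · simpa [Fin.strictMono_iff_lt_succ] using hlt
    · fin_cases i
      simpa using hγ

/-- The `ε`-regularisation makes the square root differentiable at the south pole. -/
theorem sqrt_sub_sqrt_le_sAction_add {γ : ℝ → Sph n} {a b ε : ℝ} (hε : 0 < ε) (hab : a ≤ b)
    (hγ : ContDiffOn ℝ 1 (fun t => (γ t : Amb n)) (Icc a b)) :
    2 * √(2 + 2 * lastCoord n (γ a) + ε) - 2 * √(2 + 2 * lastCoord n (γ b) + ε)
      ≤ sAction n γ a b + (b - a) := by
  obtain ⟨W, hW, hd⟩ := exists_hasDerivAt_of_contDiffOn hγ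
  have hpos : ∀ s, 0 < 2 + 2 * lastCoord n (γ s) + ε := fun s => by
    linarith [neg_one_le_lastCoord (γ s)]
  have hderiv : ∀ s ∈ Ioo a b, HasDerivAt (fun t => -(2 * √(2 + 2 * lastCoord n (γ t) + ε)))
      (-(2 * (2 * lastCoord n (W s) / (2 * √(2 + 2 * lastCoord n (γ s) + ε))))) s :=
    fun s hs => ((((((hasDerivAt_lastCoord (hd s hs)).const_mul 2).const_add 2).add_const ε).sqrt
      (hpos s).ne').const_mul 2).neg
  have hbound : ∀ s ∈ Ioo a b,
      -(2 * (2 * lastCoord n (W s) / (2 * √(2 + 2 * lastCoord n (γ s) + ε))))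
        ≤ Lsph n (γ s) (W s) + 1 := by
    intro s hs
    have htan := two_mul_abs_lastCoord_le
      (inner_eq_zero_of_hasDerivAt_of_norm_eq (hd s hs) fun t => norm_eq_of_mem_sphere (γ t))
    have hA : 0 ≤ Lsph n (γ s) (W s) + 1 := by
      simp only [Lsph]
      nlinarith [sq_nonneg ‖W s‖, lastCoord_le_one (γ s)]
    have hroot : √(2 + 2 * lastCoord n (γ s)) ≤ √(2 + 2 * lastCoord n (γ s) + ε) :=
      Real.sqrt_le_sqrt (by linarith)
    have hrpos := Real.sqrt_pos.2 (hpos s)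
    rw [show ∀ l r : ℝ, -(2 * (2 * l / (2 * r))) = -(2 * l) / r by intros; ring,
      div_le_iff₀ hrpos]
    nlinarith [neg_abs_le (lastCoord n (W s)), mul_le_mul_of_nonneg_left hroot hA]
  have hcont : ContinuousOn (fun t => -(2 * √(2 + 2 * lastCoord n (γ t) + ε))) (Icc a b) := by
    have := continuous_lastCoord.comp_continuousOn hγ.continuousOn
    fun_prop
  have hFTC := intervalIntegral.sub_le_integral_of_hasDeriv_right_of_le hab hcont
    (fun s hs => (hderiv s hs).hasDerivWithinAt)
    ((continuousOn_Lsph hγ.continuousOn hW).add continuousOn_const).integrableOn_Icc hbound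
  rw [← one_mul (b - a), sAction_add_mul_eq_integral 1 hab hγ.continuousOn hW hd]
  simp only [Pi.add_apply] at hFTC
  linarith

theorem uPlus_sub_le_sAction_add {γ : ℝ → Sph n} {a b : ℝ} (hab : a ≤ b)
    (hγ : ContDiffOn ℝ 1 (fun t => (γ t : Amb n)) (Icc a b)) :
    uPlus n (γ b) - uPlus n (γ a) ≤ sAction n γ a b + (b - a) := by
  have hlim : Tendsto (fun ε => 2 * √(2 + 2 * lastCoord n (γ a) + ε)
      - 2 * √(2 + 2 * lastCoord n (γ b) + ε)) (𝓝[>] 0) (𝓝 (uPlus n (γ b) - uPlus n (γ a))) := by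
    refine tendsto_nhdsWithin_of_tendsto_nhds ?_
    convert (by fun_prop : Continuous fun ε => 2 * √(2 + 2 * lastCoord n (γ a) + ε)
      - 2 * √(2 + 2 * lastCoord n (γ b) + ε)).tendsto 0 using 2
    rw [uPlus_eq, uPlus_eq]
    simp only [add_zero]
    ring
  exact le_of_tendsto hlim
    (eventually_nhdsWithin_of_forall fun ε hε => sqrt_sub_sqrt_le_sAction_add hε hab hγ)

end Action

section GreatCircle

variable {n : ℕ}

def greatCircle (e : Sph n) (he : lastCoord n e = 0) (t : ℝ) : Sph n :=
  ⟨cos t • (northPole n : Amb n) + sin t • (e : Amb n), by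
    rw [mem_sphere_zero_iff_norm]
    exact norm_cos_smul_add_sin_smul (norm_eq_of_mem_sphere _) (norm_eq_of_mem_sphere e)
      (by rw [real_inner_comm, ← lastCoord_eq_inner, he]) t⟩

variable {e : Sph n} {he : lastCoord n e = 0}

theorem lastCoord_greatCircle (t : ℝ) : lastCoord n (greatCircle e he t) = cos t := by
  simp only [lastCoord] at he
  simp [greatCircle, lastCoord, northPole, he]

theorem greatCircle_zero : greatCircle e he 0 = northPole n :=
  Subtype.ext (by simp [greatCircle])

theorem hasDerivAt_greatCircle (t : ℝ) :
    HasDerivAt (fun t => (greatCircle e he t : Amb n)) (greatCircle e he (t + π / 2)) t := by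
  refine (((hasDerivAt_cos t).smul_const _).add
    ((hasDerivAt_sin t).smul_const _)).congr_deriv ?_
  simp [greatCircle, cos_add_pi_div_two, sin_add_pi_div_two, neg_smul]

theorem continuous_greatCircle : Continuous (fun t => (greatCircle e he t : Amb n)) :=
  continuous_iff_continuousAt.2 fun t => (hasDerivAt_greatCircle t).continuousAt

theorem uPlus_greatCircle {T : ℝ} (hT : 0 ≤ T) (hTπ : T ≤ π) :
    uPlus n (greatCircle e he T) = 4 - 4 * cos (T / 2) := by
  have hcos : 0 ≤ cos (T / 2) :=
    cos_nonneg_of_mem_Icc ⟨by linarith [pi_pos], by linarith⟩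
  have hdouble : 2 + 2 * cos T = (2 * cos (T / 2)) ^ 2 := by
    rw [show T = 2 * (T / 2) by ring, cos_two_mul]
    ring_nf
  rw [uPlus_eq, lastCoord_greatCircle, hdouble, Real.sqrt_sq (by linarith)]
  ring

theorem exists_greatCircle_eq (hn : 1 ≤ n) (p : Sph n) :
    ∃ (e : Sph n) (he : lastCoord n e = 0),
      greatCircle e he (arccos (lastCoord n p)) = p := by
  set c := lastCoord n p
  set w : Amb n := (p : Amb n) - c • (northPole n : Amb n)
  have hwlast : lastCoord n w = 0 := by
    simp [w, c, lastCoord, northPole]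
  have hwnorm : √(1 - c ^ 2) = ‖w‖ := by
    have : ‖w‖ ^ 2 = 1 - c ^ 2 := by
      rw [norm_sub_sq_real, real_inner_smul_right, ← lastCoord_eq_inner, norm_smul,
        norm_eq_of_mem_sphere, norm_eq_of_mem_sphere, Real.norm_eq_abs]
      ring_nf
      rw [sq_abs]
      ring
    rw [← this, Real.sqrt_sq (norm_nonneg w)]
  suffices h : ∃ (e : Sph n) (_ : lastCoord n e = 0), ‖w‖ • (e : Amb n) = w by
    obtain ⟨e, he, hew⟩ := h
    refine ⟨e, he, Subtype.ext ?_⟩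
    have hcos : cos (arccos c) = c :=
      cos_arccos (neg_one_le_lastCoord p) (lastCoord_le_one p)
    simp only [greatCircle, hcos, sin_arccos, hwnorm, hew, w]
    abel
  by_cases hw : w = 0
  · refine ⟨⟨EuclideanSpace.single 0 1, by simp⟩, ?_, by simp [hw]⟩
    simp [lastCoord, Fin.ext_iff]
    omega
  · refine ⟨⟨‖w‖⁻¹ • w, mem_sphere_zero_iff_norm.2 (norm_smul_inv_norm hw)⟩, ?_, ?_⟩
    · simp only [lastCoord] at hwlast ⊢
      simp [hwlast]
    · simp [smul_smul, mul_inv_cancel₀ (norm_ne_zero_iff.2 hw)]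

end GreatCircle

section Dominated

variable {n : ℕ} {u : Sph n → ℝ}

theorem sDominated.sub_le_integral_greatCircle {c : ℝ} (hu : sDominated n c u) (e : Sph n)
    (he : lastCoord n e = 0) {θ θ' : ℝ → ℝ} (hθ : ∀ s, HasDerivAt θ (θ' s) s)
    (hθ' : Continuous θ') {a b : ℝ} (hab : a ≤ b) :
    u (greatCircle e he (θ b)) - u (greatCircle e he (θ a))
      ≤ ∫ s in a..b, (θ' s ^ 2 / 2 - cos (θ s) + c) := by
  set γ := fun s => greatCircle e he (θ s)
  set W := fun s => θ' s • (greatCircle e he (θ s + π / 2) : Amb n)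
  have hd : ∀ s, HasDerivAt (fun t => (γ t : Amb n)) (W s) s := fun s =>
    (hasDerivAt_greatCircle (θ s)).scomp s (hθ s)
  have hθc : Continuous θ := continuous_iff_continuousAt.2 fun s => (hθ s).continuousAt
  have hW : Continuous W := hθ'.smul (continuous_greatCircle.comp (hθc.add continuous_const))
  have hγ : ContDiff ℝ 1 (fun t => (γ t : Amb n)) :=
    contDiff_one_iff_deriv.2 ⟨fun s => (hd s).differentiableAt,
      by rwa [funext fun s => (hd s).deriv]⟩
  have hL : ∀ s, Lsph n (γ s) (W s) = θ' s ^ 2 / 2 - cos (θ s) := fun s => by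
    simp only [Lsph, W, γ, norm_smul, norm_eq_of_mem_sphere, mul_one, Real.norm_eq_abs, sq_abs,
      lastCoord_greatCircle]
  have hdom := hu γ a b hab (sPiecewiseC1On_of_contDiffOn hab hγ.contDiffOn)
  rw [sAction_add_mul_eq_integral c hab hγ.continuous.continuousOn hW.continuousOn
    (fun s _ => hd s)] at hdom
  simpa only [hL] using hdom

theorem sDominated.abs_sub_northPole_le (hn : 1 ≤ n) (hu : sDominated n 1 u) (p : Sph n) :
    |u p - u (northPole n)| ≤ 3 * arccos (lastCoord n p) := by
  obtain ⟨e, he, hp⟩ := exists_greatCircle_eq hn p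
  set T := arccos (lastCoord n p)
  have hT : 0 ≤ T := arccos_nonneg _
  have hcost : ∀ θ θ' : ℝ → ℝ, (∀ s, HasDerivAt θ (θ' s) s) → Continuous θ' →
      (∀ s, θ' s ^ 2 = 1) → u (greatCircle e he (θ T)) - u (greatCircle e he (θ 0)) ≤ 3 * T := by
    intro θ θ' hθ hθ' hunit
    have hθc : Continuous θ := continuous_iff_continuousAt.2 fun s => (hθ s).continuousAt
    refine (hu.sub_le_integral_greatCircle e he hθ hθ' hT).trans ?_
    have hmono := intervalIntegral.integral_mono_on hT
      ((by fun_prop : Continuous fun s => θ' s ^ 2 / 2 - cos (θ s) + 1).intervalIntegrable 0 T)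
      (intervalIntegrable_const (μ := volume)) fun s _ => show _ ≤ (3 : ℝ) by
        rw [hunit]
        linarith [neg_one_le_cos (θ s)]
    simpa [mul_comm] using hmono
  have hto := hcost id (fun _ => 1) hasDerivAt_id continuous_const fun _ => one_pow 2
  have hfrom := hcost (fun s => T - s) (fun _ => -1) (fun s => (hasDerivAt_id s).const_sub T)
    continuous_const fun _ => by norm_num
  simp only [id, sub_zero, sub_self, greatCircle_zero, hp] at hto hfrom
  exact abs_sub_le_iff.2 ⟨hto, hfrom⟩

theorem sDominated.tendsto_northPole (hn : 1 ≤ n) (hu : sDominated n 1 u) {α : Type*}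
    {l : Filter α} {p : α → Sph n} (hp : Tendsto (fun k => lastCoord n (p k)) l (𝓝 1)) :
    Tendsto (fun k => u (p k)) l (𝓝 (u (northPole n))) := by
  have hbound : Tendsto (fun k => 3 * arccos (lastCoord n (p k))) l (𝓝 0) := by
    simpa using ((continuous_arccos.tendsto 1).comp hp).const_mul 3
  rw [tendsto_iff_dist_tendsto_zero]
  exact squeeze_zero (fun _ => dist_nonneg)
    (fun k => (Real.dist_eq _ _).trans_le (hu.abs_sub_northPole_le hn (p k))) hbound

theorem tendsto_uPlus {α : Type*} {l : Filter α} {p : α → Sph n}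
    (hp : Tendsto (fun k => lastCoord n (p k)) l (𝓝 1)) :
    Tendsto (fun k => uPlus n (p k)) l (𝓝 0) := by
  have h := ((by fun_prop : Continuous fun c : ℝ => 4 - 2 * √(2 + 2 * c)).tendsto 1).comp hp
  rw [show (2 : ℝ) + 2 * 1 = 2 ^ 2 by norm_num, Real.sqrt_sq zero_le_two] at h
  norm_num [Function.comp_def] at h
  simpa [uPlus_eq] using h

end Dominated

section Separatrix

/-- The angle from `N` along the pendulum separatrix: it has the energy `θ'² / 2 + cos θ = 1` of the
upper equilibrium, so that `L + 1 = θ'²` along it. -/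
def separatrix (s : ℝ) : ℝ := 4 * arctan (exp s)

@[fun_prop]
theorem continuous_separatrix : Continuous separatrix := by
  unfold separatrix
  fun_prop

theorem hasDerivAt_separatrix (s : ℝ) :
    HasDerivAt separatrix (2 * sin (separatrix s / 2)) s := by
  refine (((hasDerivAt_arctan (exp s)).comp s (hasDerivAt_exp s)).const_mul 4).congr_deriv ?_
  have hroot : √(1 + exp s ^ 2) ^ 2 = 1 + exp s ^ 2 := Real.sq_sqrt (by positivity)
  rw [separatrix, show 4 * arctan (exp s) / 2 = 2 * arctan (exp s) by ring, sin_two_mul,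
    sin_arctan, cos_arctan]
  field_simp
  rw [hroot]
  ring

theorem tendsto_separatrix_atBot : Tendsto separatrix atBot (𝓝 0) := by
  unfold separatrix
  simpa using ((continuous_arctan.tendsto 0).comp tendsto_exp_atBot).const_mul 4

theorem separatrix_log_tan {T : ℝ} (hT : 0 < T) (hTπ : T ≤ π) :
    separatrix (log (tan (T / 4))) = T := by
  have hpi := pi_pos
  rw [separatrix, exp_log (tan_pos_of_pos_of_lt_pi_div_two (by linarith) (by linarith)),
    arctan_tan (by linarith) (by linarith)]
  ring

theorem integral_separatrix (a b : ℝ) :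
    ∫ s in a..b, ((2 * sin (separatrix s / 2)) ^ 2 / 2 - cos (separatrix s) + 1)
      = 4 * cos (separatrix a / 2) - 4 * cos (separatrix b / 2) := by
  have hderiv : ∀ s, HasDerivAt (fun t => -4 * cos (separatrix t / 2))
      ((2 * sin (separatrix s / 2)) ^ 2 / 2 - cos (separatrix s) + 1) s := by
    intro s
    refine (((hasDerivAt_cos _).comp s ((hasDerivAt_separatrix s).div_const 2)).const_mul
      (-4)).congr_deriv ?_
    rw [show cos (separatrix s) = cos (2 * (separatrix s / 2)) by ring_nf, cos_two_mul]
    linear_combination 2 * sin_sq_add_cos_sq (separatrix s / 2)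
  rw [intervalIntegral.integral_eq_sub_of_hasDerivAt (fun s _ => hderiv s)
    ((by fun_prop : Continuous fun s => (2 * sin (separatrix s / 2)) ^ 2 / 2
      - cos (separatrix s) + 1).intervalIntegrable a b)]
  ring

end Separatrix

section WeakKAM

variable {n : ℕ} {u : Sph n → ℝ}

theorem sDominated.le_add_uPlus (hn : 1 ≤ n) (hu : sDominated n 1 u) (x : Sph n) :
    u x ≤ u (northPole n) + uPlus n x := by
  obtain ⟨e, he, hx⟩ := exists_greatCircle_eq hn x
  generalize hTdef : arccos (lastCoord n x) = T at hx
  have hTπ : T ≤ π := hTdef ▸ arccos_le_pi _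
  subst hx
  rcases (hTdef ▸ arccos_nonneg _ : 0 ≤ T).eq_or_lt with rfl | hT
  · rw [greatCircle_zero, uPlus_northPole, add_zero]
  have hcost : ∀ a ≤ log (tan (T / 4)), u (greatCircle e he T)
      ≤ u (greatCircle e he (separatrix a)) + (4 * cos (separatrix a / 2) - 4 * cos (T / 2)) := by
    intro a ha
    have h := hu.sub_le_integral_greatCircle e he hasDerivAt_separatrix (by fun_prop) ha
    rw [integral_separatrix, separatrix_log_tan hT hTπ] at h
    linarith
  have hlim : Tendsto (fun a => u (greatCircle e he (separatrix a))
      + (4 * cos (separatrix a / 2) - 4 * cos (T / 2))) atBot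
      (𝓝 (u (northPole n) + (4 - 4 * cos (T / 2)))) := by
    have hhalf : Tendsto (fun a => separatrix a / 2) atBot (𝓝 0) := by
      simpa using tendsto_separatrix_atBot.div_const 2
    refine (hu.tendsto_northPole hn ?_).add ?_
    · simpa [Function.comp_def, lastCoord_greatCircle] using
        (continuous_cos.tendsto 0).comp tendsto_separatrix_atBot
    · simpa [Function.comp_def] using
        (((continuous_cos.tendsto 0).comp hhalf).const_mul 4).sub_const (4 * cos (T / 2))
  rw [uPlus_greatCircle hT.le hTπ]
  exact ge_of_tendsto hlim (eventually_atBot.2 ⟨_, hcost⟩)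

def IsCalibrated (c : ℝ) (u : Sph n → ℝ) (γ : ℝ → Sph n) : Prop :=
  ContDiffOn ℝ 1 (fun s => (γ s : Amb n)) (Iic 0) ∧
    ∀ t : ℝ, 0 ≤ t → u (γ 0) - u (γ (-t)) = sAction n γ (-t) 0 + c * t

theorem mul_sub_le_sAction_add {γ : ℝ → Sph n} {a b δ : ℝ} (hab : a ≤ b)
    (hγ : ContDiffOn ℝ 1 (fun t => (γ t : Amb n)) (Icc a b))
    (hfar : ∀ s ∈ Icc a b, lastCoord n (γ s) ≤ 1 - δ) :
    δ * (b - a) ≤ sAction n γ a b + (b - a) := by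
  obtain ⟨W, hW, hd⟩ := exists_hasDerivAt_of_contDiffOn hγ
  have hmono := intervalIntegral.integral_mono_on hab (intervalIntegrable_const (μ := volume))
    (((continuousOn_Lsph hγ.continuousOn hW).add continuousOn_const).intervalIntegrable_of_Icc
      hab) fun s hs => show δ ≤ Lsph n (γ s) (W s) + 1 by
        simp only [Lsph]
        nlinarith [hfar s hs, sq_nonneg ‖W s‖]
  rw [← one_mul (b - a), sAction_add_mul_eq_integral 1 hab hγ.continuousOn hW hd]
  simpa [mul_comm] using hmono

theorem IsCalibrated.exists_lastCoord_gt (hn : 1 ≤ n) (hu : sDominated n 1 u)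
    {γ : ℝ → Sph n} (hγ : IsCalibrated 1 u γ) {δ : ℝ} (hδ : 0 < δ) :
    ∃ t, 0 ≤ t ∧ 1 - δ < lastCoord n (γ (-t)) := by
  by_contra! hfar
  set t := 6 * π / δ + 1
  have ht : 0 ≤ t := by positivity
  have hcost := mul_sub_le_sAction_add (neg_nonpos.2 ht) (hγ.1.mono Icc_subset_Iic_self)
    fun s hs => by simpa using hfar (-s) (by linarith [hs.2])
  have hbdd : u (γ 0) - u (γ (-t)) ≤ 6 * π := by
    have h0 := abs_le.1 (hu.abs_sub_northPole_le hn (γ 0))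
    have hγt := abs_le.1 (hu.abs_sub_northPole_le hn (γ (-t)))
    linarith [arccos_le_pi (lastCoord n (γ 0)), arccos_le_pi (lastCoord n (γ (-t)))]
  rw [hγ.2 t ht] at hbdd
  have hδt : δ * t = 6 * π + δ := by
    simp only [t]
    field_simp
  linarith

theorem IsCalibrated.add_uPlus_le (hn : 1 ≤ n) (hu : sDominated n 1 u) {γ : ℝ → Sph n}
    (hγ : IsCalibrated 1 u γ) : u (northPole n) + uPlus n (γ 0) ≤ u (γ 0) := by
  choose t ht hnear using fun k : ℕ => hγ.exists_lastCoord_gt hn hu Nat.one_div_pos_of_nat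
  have hlim : Tendsto (fun k => lastCoord n (γ (-t k))) atTop (𝓝 1) := by
    refine tendsto_of_tendsto_of_tendsto_of_le_of_le ?_ tendsto_const_nhds
      (fun k => (hnear k).le) fun k => lastCoord_le_one _
    simpa using (tendsto_one_div_add_atTop_nhds_zero_nat (𝕜 := ℝ)).const_sub 1
  have hle : ∀ k, uPlus n (γ 0) ≤ u (γ 0) - u (γ (-t k)) + uPlus n (γ (-t k)) := fun k => by
    have h := uPlus_sub_le_sAction_add (neg_nonpos.2 (ht k)) (hγ.1.mono Icc_subset_Iic_self)
    rw [hγ.2 (t k) (ht k)]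
    linarith
  have h := le_of_tendsto_of_tendsto' tendsto_const_nhds
    ((tendsto_const_nhds.sub (hu.tendsto_northPole hn hlim)).add (tendsto_uPlus hlim)) hle
  linarith

end WeakKAM

/-- Uniqueness of the backward weak KAM solution of the spherical
pendulum: every backward weak KAM solution `u` for the value `c = 1` satisfies
`u x = u N + ∫_{x_{n+1}}^1 √((2−2s)/(1−s²)) ds`, where `N = (0,…,0,1)` is the north pole;
in particular backward weak KAM solutions are unique up to an additive constant. -/
theorem backward_weakKAM_unique (hn : 1 ≤ n)
    (u : Sph n → ℝ) (hu : sBackwardWeakKAM n 1 u) :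
    ∀ x : Sph n,
      u x = u (northPole n) +
        ∫ s in (lastCoord n (x : Amb n))..1, Real.sqrt ((2 - 2 * s) / (1 - s ^ 2)) := by
  intro x
  obtain ⟨γ, rfl, hγ⟩ := hu.2 x
  exact le_antisymm (hu.1.le_add_uPlus hn (γ 0)) (IsCalibrated.add_uPlus_le hn hu.1 hγ)

end SphericalPendulum
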